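/- If $u$ is free in matching $M$ (with $b\equiv 1$) and $(u,w)$ is a blocking pair removed (so $u$ is matched to $w$, and $w$'s previous partner $u'$, if any, becomes free), then no blocking pair of the resulting matching $M_2$ that involves $u$ is new: every blocking pair of $M_2$ containing $u$ was already a blocking pair of $M$. -/
import Mathlib


/-- Blocking pair in the one-to-one case with strict ranks (lower = better):
`(u,w) ∉ M`, the pair is mutually acceptable, `u` is unmatched or prefers `w`
to its current partner, and `w` is unmatched or prefers `u` to its current partner. -/
def IsBlockingPair {U W : Type*}
    (E : U → W → Prop) (ru : U → W → ℕ) (rw : W → U → ℕ)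
    (M : Finset (U × W)) (u : U) (w : W) : Prop :=
  E u w ∧ (u, w) ∉ M ∧
    ((∀ x, (u, x) ∉ M) ∨ ∃ x, (u, x) ∈ M ∧ ru u w < ru u x) ∧
    ((∀ x, (x, w) ∉ M) ∨ ∃ x, (x, w) ∈ M ∧ rw w u < rw w x)

/-- If `u` is free in the one-to-one matching `M` and the blocking pair `(u,w)` is
removed (so `u` gets matched to `w`, and `w`'s previous partner `u'`, if any, becomes
free), then every blocking pair of the resulting matching `M₂` that involves `u` was
already a blocking pair of `M`. -/
theorem no_new_blocking_pair_for_free_agent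
    {U W : Type*} [DecidableEq U] [DecidableEq W]
    (E : U → W → Prop) (ru : U → W → ℕ) (rw : W → U → ℕ)
    (M : Finset (U × W))
    (u : U) (w : W)
    (hfree : ∀ x, (u, x) ∉ M)
    (hbp : IsBlockingPair E ru rw M u w)
    (u' : Option U)
    -- `u'` is `w`'s partner in `M`, if it exists
    (hu' : ∀ x, (x, w) ∈ M ↔ u' = some x)
    (M₂ : Finset (U × W))
    (hM₂ : M₂ = (M \ (u'.elim ∅ fun x => {(x, w)})) ∪ {(u, w)}) :
    ∀ y, IsBlockingPair E ru rw M₂ u y → IsBlockingPair E ru rw M u y := by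

  intro y hy
  obtain ⟨hE, hnot, _, hw⟩ := hy
  have hyw : y ≠ w := by
    rintro rfl
    exact hnot (by simp [hM₂])
  have hmem : ∀ x : U, (x, y) ∈ M₂ ↔ (x, y) ∈ M := by
    intro x
    subst hM₂
    simp only [Finset.mem_union, Finset.mem_sdiff, Finset.mem_singleton, Prod.mk.injEq]
    constructor
    · rintro (⟨h, _⟩ | ⟨_, rfl⟩)
      · exact h
      · exact absurd rfl hyw
    · intro h
      left
      refine ⟨h, ?_⟩
      cases u' with
      | none => simp
      | some a => simp [hyw]
  refine ⟨hE, hfree y, Or.inl hfree, ?_⟩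
  rcases hw with h | ⟨x, hx, hr⟩
  · exact Or.inl fun x hx => h x ((hmem x).mpr hx)
  · exact Or.inr ⟨x, (hmem x).mp hx, hr⟩
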